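/- Let G be a finite simple graph with maximum degree Δ(G) ≥ 2. Then the largest root of the matching polynomial of the subdivision of G satisfies λ(𝓜(S(G), x)) < 1 + √(Δ(G) − 1). In particular, if F is a forest with Δ(F) ≥ 2, then the largest eigenvalue of the adjacency matrix of S(F) satisfies λ(A(S(F))) < 1 + √(Δ(F) − 1). -/

import Mathlib

/-!
Write `μ(S) = μ(S(G)[S], x)` and `t = √(Δ - 1)`, and fix `x ≥ 1 + t`. Induction on `S`, through the
vertex-deletion recurrence `μ(S) = x μ(S - u) - ∑_{v ∼ u} μ(S - u - v)`, shows `μ(S) > 0` together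
with two ratio bounds: `μ(S - a) < μ(S)` for an original vertex `a` with fewer than `Δ` neighbours
in `S`, and `t μ(S - v_e) < μ(S)` for a subdivision vertex `v_e` with at most one neighbour in `S`.
Deleting `a` leaves each neighbouring `v_e` with at most one neighbour, and deleting `v_e` leaves
each neighbouring `a` with fewer than `Δ`, so each bound feeds the other; the numerical input is
`(x - 1) t ≥ t² = Δ - 1` and `x - t ≥ 1`. Taking `S` to be everything, `𝓜(S(G), x) > 0`.

If `G` is a forest, the only permutations in the determinant expansion of `det (x - A(S(G)))` are
involutions along the edges of a matching, so the characteristic polynomial is `𝓜(S(G), x)`.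
-/

namespace LM

open Finset

variable {V : Type*}

/-- The set of matchings of `G`, as finsets of edges that pairwise share no vertex. -/
def matchings [Fintype V] [DecidableEq V] (G : SimpleGraph V) [DecidableRel G.Adj] :
    Finset (Finset (Sym2 V)) :=
  G.edgeFinset.powerset.filter
    (fun M => ∀ e ∈ M, ∀ f ∈ M, e ≠ f → ∀ w : V, w ∈ e → w ∉ f)

/-- The set of vertices covered by a set of edges. -/
def covered [Fintype V] [DecidableEq V] (M : Finset (Sym2 V)) : Finset V :=
  Finset.univ.filter (fun v => ∃ e ∈ M, v ∈ e)

/-- The multivariate matching polynomial `𝔐(G, x_G)`. -/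
noncomputable def mvMatch [Fintype V] [DecidableEq V] (G : SimpleGraph V)
    [DecidableRel G.Adj] : MvPolynomial V ℝ :=
  ∑ M ∈ matchings G, (-1 : MvPolynomial V ℝ) ^ M.card *
    ∏ v ∈ Finset.univ \ covered M, MvPolynomial.X v

/-- The matching polynomial `𝓜(G, x)`. -/
noncomputable def matchPoly [Fintype V] [DecidableEq V] (G : SimpleGraph V)
    [DecidableRel G.Adj] : Polynomial ℝ :=
  ∑ M ∈ matchings G, (-1 : Polynomial ℝ) ^ M.card *
    Polynomial.X ^ (Fintype.card V - 2 * M.card)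

/-- The Laplacian matching polynomial `𝓛𝓜(G, x)`. -/
noncomputable def lapMatch [Fintype V] [DecidableEq V] (G : SimpleGraph V)
    [DecidableRel G.Adj] : Polynomial ℝ :=
  ∑ M ∈ matchings G, (-1 : Polynomial ℝ) ^ M.card *
    ∏ v ∈ Finset.univ \ covered M, (Polynomial.X - Polynomial.C (G.degree v : ℝ))

/-- The largest real root of a polynomial (`sSup` of its set of real roots). -/
noncomputable def lroot (p : Polynomial ℝ) : ℝ := sSup {x : ℝ | p.IsRoot x}

instance instDecidableRelInduceAdj (G : SimpleGraph V) [DecidableRel G.Adj] (s : Set V) :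
    DecidableRel (G.induce s).Adj := fun a b =>
  inferInstanceAs (Decidable (G.Adj a b))

/-- The relation underlying the subdivision of `G`: an original vertex `a` is joined to the
new vertex `v_e` of every edge `e` incident with `a`. -/
def sdRel (G : SimpleGraph V) (x y : V ⊕ G.edgeSet) : Prop :=
  ∃ (a : V) (e : G.edgeSet), x = Sum.inl a ∧ y = Sum.inr e ∧ a ∈ (e : Sym2 V)

instance [Fintype V] [DecidableEq V] (G : SimpleGraph V) [DecidableRel G.Adj]
    (x y : V ⊕ G.edgeSet) : Decidable (sdRel G x y) :=
  inferInstanceAs (Decidable (∃ (_ : V) (_ : G.edgeSet), _ ∧ _ ∧ _))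

/-- The subdivision `S(G)` of `G`: every edge `e = {a, b}` is replaced by a new vertex `v_e`
together with the two edges `{a, v_e}` and `{v_e, b}`. -/
def subdivision (G : SimpleGraph V) : SimpleGraph (V ⊕ G.edgeSet) :=
  SimpleGraph.fromRel (sdRel G)

instance [Fintype V] [DecidableEq V] (G : SimpleGraph V) [DecidableRel G.Adj] :
    DecidableRel (subdivision G).Adj := fun x y =>
  inferInstanceAs (Decidable (x ≠ y ∧ (sdRel G x y ∨ sdRel G y x)))

section Matchings

variable [Fintype V] [DecidableEq V] {G : SimpleGraph V} [DecidableRel G.Adj]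
  {M : Finset (Sym2 V)}

lemma mem_matchings : M ∈ matchings G ↔
    M ⊆ G.edgeFinset ∧ ∀ e ∈ M, ∀ f ∈ M, e ≠ f → ∀ w : V, w ∈ e → w ∉ f := by
  simp [matchings]

lemma mem_covered {v : V} : v ∈ covered M ↔ ∃ e ∈ M, v ∈ e := by
  simp [covered]

lemma mem_edgeSet_of_mem_matchings (hM : M ∈ matchings G) {e : Sym2 V} (he : e ∈ M) :
    e ∈ G.edgeSet :=
  G.mem_edgeFinset.1 ((mem_matchings.1 hM).1 he)

lemma eq_of_mem_matchings (hM : M ∈ matchings G) {u : V} {e f : Sym2 V}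
    (he : e ∈ M) (hue : u ∈ e) (hf : f ∈ M) (huf : u ∈ f) : e = f := by
  by_contra hne
  exact (mem_matchings.1 hM).2 e he f hf hne u hue huf

lemma erase_mem_matchings (hM : M ∈ matchings G) (e : Sym2 V) : M.erase e ∈ matchings G := by
  rw [mem_matchings] at hM ⊢
  exact ⟨(M.erase_subset e).trans hM.1,
    fun f hf g hg => hM.2 f (M.mem_of_mem_erase hf) g (M.mem_of_mem_erase hg)⟩

lemma insert_mem_matchings {u v : V} (hM : M ∈ matchings G) (huv : G.Adj u v)
    (hu : u ∉ covered M) (hv : v ∉ covered M) : insert s(u, v) M ∈ matchings G := by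
  rw [mem_matchings] at hM ⊢
  refine ⟨insert_subset (G.mem_edgeFinset.2 huv) hM.1, ?_⟩
  have hfree : ∀ f ∈ M, ∀ w ∈ s(u, v), w ∉ f := by
    rintro f hf w hw hwf
    rcases Sym2.mem_iff.1 hw with rfl | rfl
    exacts [hu (mem_covered.2 ⟨f, hf, hwf⟩), hv (mem_covered.2 ⟨f, hf, hwf⟩)]
  intro e he f hf hef w hwe hwf
  rcases mem_insert.1 he with rfl | he <;> rcases mem_insert.1 hf with rfl | hf
  exacts [hef rfl, hfree f hf w hwe hwf, hfree e he w hwf hwe, hM.2 e he f hf hef w hwe hwf]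

lemma covered_insert {u v : V} : covered (insert s(u, v) M) = insert u (insert v (covered M)) := by
  ext w
  simp only [mem_covered, mem_insert, exists_eq_or_imp, Sym2.mem_iff]
  tauto

lemma card_covered (hM : M ∈ matchings G) : #(covered M) = 2 * #M := by
  have hcov : covered M = M.biUnion Sym2.toFinset := by
    ext v; simp [mem_covered, Sym2.mem_toFinset]
  rw [hcov, card_biUnion, sum_congr rfl fun e he => Sym2.card_toFinset_of_not_isDiag e
    (G.not_isDiag_of_mem_edgeSet (mem_edgeSet_of_mem_matchings hM he)), sum_const,
    smul_eq_mul, mul_comm]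
  intro e he f hf hef
  simp only [disjoint_left, Sym2.mem_toFinset]
  exact fun v hve hvf => (mem_matchings.1 hM).2 e he f hf hef v hve hvf

end Matchings

section MatchEvalOn

variable [Fintype V] [DecidableEq V] (G : SimpleGraph V) [DecidableRel G.Adj]

def matchingsOn (S : Finset V) : Finset (Finset (Sym2 V)) :=
  (matchings G).filter (covered · ⊆ S)

/-- `μ(G[S], x)`: the matching polynomial of the induced subgraph `G[S]`, evaluated at `x`,
written without passing to the subtype `S`. -/
noncomputable def matchEvalOn (S : Finset V) (x : ℝ) : ℝ :=
  ∑ M ∈ matchingsOn G S, (-1 : ℝ) ^ #M * x ^ (#S - 2 * #M)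

variable {G} {S : Finset V} {M : Finset (Sym2 V)}

lemma mem_matchingsOn : M ∈ matchingsOn G S ↔ M ∈ matchings G ∧ covered M ⊆ S := by
  simp [matchingsOn]

lemma two_mul_card_le_of_mem_matchingsOn (hM : M ∈ matchingsOn G S) : 2 * #M ≤ #S := by
  rw [← card_covered (mem_matchingsOn.1 hM).1]
  exact card_le_card (mem_matchingsOn.1 hM).2

lemma matchEvalOn_empty (x : ℝ) : matchEvalOn G ∅ x = 1 := by
  have hM : matchingsOn G (∅ : Finset V) = {∅} := by
    ext M
    simp only [mem_matchingsOn, mem_singleton, subset_empty]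
    constructor
    · rintro ⟨-, hcov⟩
      refine eq_empty_of_forall_notMem fun e he => ?_
      induction e with
      | h a b => simpa [hcov] using mem_covered.2 ⟨s(a, b), he, Sym2.mem_mk_left a b⟩
    · rintro rfl
      exact ⟨by simp [mem_matchings], by ext; simp [mem_covered]⟩
  simp [matchEvalOn, hM]

lemma matchingsOn_filter_notMem_covered {u : V} :
    (matchingsOn G S).filter (u ∉ covered ·) = matchingsOn G (S.erase u) := by
  ext M
  simp only [mem_filter, mem_matchingsOn, subset_erase]
  tauto

lemma mk_notMem_of_mem_matchingsOn {u v : V} (hM : M ∈ matchingsOn G ((S.erase u).erase v)) :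
    s(u, v) ∉ M := fun he => by
  simpa using (mem_matchingsOn.1 hM).2 (mem_covered.2 ⟨_, he, Sym2.mem_mk_left u v⟩)

lemma insert_mem_matchingsOn {u v : V} (hu : u ∈ S) (hv : v ∈ S) (huv : G.Adj u v)
    (hM : M ∈ matchingsOn G ((S.erase u).erase v)) : insert s(u, v) M ∈ matchingsOn G S := by
  obtain ⟨hM, hcov⟩ := mem_matchingsOn.1 hM
  refine mem_matchingsOn.2 ⟨insert_mem_matchings hM huv (fun h => by simpa using hcov h)
    (fun h => by simpa using hcov h), ?_⟩
  rw [covered_insert]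
  exact insert_subset hu <| insert_subset hv <|
    hcov.trans ((erase_subset _ _).trans (erase_subset _ _))

lemma erase_mem_matchingsOn {u v : V} (hM : M ∈ matchings G) (hcov : covered M ⊆ S)
    (he : s(u, v) ∈ M) : M.erase s(u, v) ∈ matchingsOn G ((S.erase u).erase v) := by
  refine mem_matchingsOn.2 ⟨erase_mem_matchings hM _, fun w hw => ?_⟩
  obtain ⟨f, hf, hwf⟩ := mem_covered.1 hw
  have hfM := mem_of_mem_erase hf
  have hne : ∀ z ∈ s(u, v), w ≠ z := by
    rintro z hz rfl
    exact ne_of_mem_erase hf (eq_of_mem_matchings hM hfM hwf he hz)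
  exact mem_erase.2 ⟨hne v (Sym2.mem_mk_right u v), mem_erase.2
    ⟨hne u (Sym2.mem_mk_left u v), hcov (mem_covered.2 ⟨f, hfM, hwf⟩)⟩⟩

/-- Matchings of `G[S]` covering `u` are `insert s(u, v) M'` with `v` a neighbour of `u` in `S`
and `M'` a matching of `G[S - u - v]`. -/
lemma sum_matchingsOn_covering {u : V} (hu : u ∈ S) (x : ℝ) :
    ∑ M ∈ (matchingsOn G S).filter (u ∈ covered ·), (-1 : ℝ) ^ #M * x ^ (#S - 2 * #M) =
      -∑ v ∈ S.filter (G.Adj u), matchEvalOn G ((S.erase u).erase v) x := by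
  simp only [matchEvalOn, ← sum_neg_distrib, sum_sigma']
  symm
  refine sum_nbij (fun p => insert s(u, p.1) p.2) ?_ ?_ ?_ ?_
  · rintro ⟨v, M'⟩ hp
    simp only [mem_sigma, mem_filter] at hp
    rw [mem_filter, covered_insert]
    exact ⟨insert_mem_matchingsOn hu hp.1.1 hp.1.2 hp.2, mem_insert_self _ _⟩
  · rintro ⟨v, M₁⟩ h₁ ⟨v', M₂⟩ h₂ heq
    simp only [mem_coe, mem_sigma, mem_filter] at h₁ h₂ heq
    have hM₂ := (mem_matchingsOn.1 (insert_mem_matchingsOn hu h₂.1.1 h₂.1.2 h₂.2)).1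
    obtain rfl : v = v' := Sym2.congr_right.1 (eq_of_mem_matchings hM₂
      (heq ▸ mem_insert_self _ _) (Sym2.mem_mk_left u v) (mem_insert_self _ _)
      (Sym2.mem_mk_left u v'))
    simpa [erase_insert (mk_notMem_of_mem_matchingsOn h₁.2),
      erase_insert (mk_notMem_of_mem_matchingsOn h₂.2)] using congrArg (·.erase s(u, v)) heq
  · intro M hM
    simp only [coe_filter, Set.mem_ofPred_eq] at hM
    obtain ⟨e, he, hue⟩ := mem_covered.1 hM.2
    obtain ⟨v, rfl⟩ := Sym2.mem_iff_exists.1 hue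
    obtain ⟨hM, hcov⟩ := mem_matchingsOn.1 hM.1
    refine ⟨⟨v, M.erase s(u, v)⟩, ?_, insert_erase he⟩
    simp only [coe_sigma, Set.mem_sigma_iff, mem_coe, mem_filter]
    exact ⟨⟨hcov (mem_covered.2 ⟨_, he, Sym2.mem_mk_right u v⟩),
      mem_edgeSet_of_mem_matchings hM he⟩, erase_mem_matchingsOn hM hcov he⟩
  · rintro ⟨v, M'⟩ hp
    simp only [mem_sigma, mem_filter] at hp
    obtain ⟨⟨hv, huv⟩, hM'⟩ := hp
    have hle := two_mul_card_le_of_mem_matchingsOn hM'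
    have h₁ := card_erase_add_one hu
    have h₂ := card_erase_add_one (mem_erase.2 ⟨(G.ne_of_adj huv).symm, hv⟩)
    rw [card_insert_of_notMem (mk_notMem_of_mem_matchingsOn hM'),
      show #S - 2 * (#M' + 1) = #((S.erase u).erase v) - 2 * #M' by omega, pow_succ]
    ring

theorem matchEvalOn_eq {u : V} (hu : u ∈ S) (x : ℝ) :
    matchEvalOn G S x = x * matchEvalOn G (S.erase u) x -
      ∑ v ∈ S.filter (G.Adj u), matchEvalOn G ((S.erase u).erase v) x := by
  rw [matchEvalOn, ← sum_filter_not_add_sum_filter _ (u ∈ covered ·),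
    matchingsOn_filter_notMem_covered, sum_matchingsOn_covering hu, matchEvalOn, mul_sum,
    ← sub_eq_add_neg]
  congr 1
  refine sum_congr rfl fun M hM => ?_
  have := two_mul_card_le_of_mem_matchingsOn hM
  have := card_erase_add_one hu
  rw [show #S - 2 * #M = #(S.erase u) - 2 * #M + 1 by omega, pow_succ]
  ring

end MatchEvalOn

section Subdivision

variable {G : SimpleGraph V}

@[simp] lemma subdivision_adj_inl_inr {a : V} {e : G.edgeSet} :
    (subdivision G).Adj (Sum.inl a) (Sum.inr e) ↔ a ∈ (e : Sym2 V) := by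
  simp [subdivision, sdRel]

@[simp] lemma subdivision_adj_inr_inl {a : V} {e : G.edgeSet} :
    (subdivision G).Adj (Sum.inr e) (Sum.inl a) ↔ a ∈ (e : Sym2 V) := by
  rw [SimpleGraph.adj_comm, subdivision_adj_inl_inr]

@[simp] lemma not_subdivision_adj_inl_inl {a b : V} :
    ¬ (subdivision G).Adj (Sum.inl a) (Sum.inl b) := by
  simp [subdivision, sdRel]

@[simp] lemma not_subdivision_adj_inr_inr {e f : G.edgeSet} :
    ¬ (subdivision G).Adj (Sum.inr e) (Sum.inr f) := by
  simp [subdivision, sdRel]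

variable [Fintype V] [DecidableEq V] [DecidableRel G.Adj] (S : Finset (V ⊕ G.edgeSet))

lemma card_filter_subdivision_adj_inl_le (a : V) :
    #(S.filter ((subdivision G).Adj (Sum.inl a))) ≤ G.degree a := by
  rw [← G.card_incidenceFinset_eq_degree]
  refine card_le_card_of_injOn (Sum.elim (fun _ => s(a, a)) Subtype.val) ?_ ?_
  · rintro (b | e) hw <;> simp only [coe_filter, Set.mem_ofPred_eq] at hw
    · exact absurd hw.2 not_subdivision_adj_inl_inl
    · simpa [SimpleGraph.incidenceSet] using subdivision_adj_inl_inr.1 hw.2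
  · rintro (b | e) hw (b' | e') hw' heq <;> simp_all [Subtype.ext_iff]

lemma card_filter_subdivision_adj_inr_le (e : G.edgeSet) :
    #(S.filter ((subdivision G).Adj (Sum.inr e))) ≤ 2 := by
  rw [← Sym2.card_toFinset_of_not_isDiag _ (G.not_isDiag_of_mem_edgeSet e.2)]
  refine card_le_card_of_injOn (Sum.elim id fun f => f.1.out.1) ?_ ?_
  · rintro (b | f) hw <;> simp only [coe_filter, Set.mem_ofPred_eq] at hw
    · simpa [Sym2.mem_toFinset] using hw.2
    · exact absurd hw.2 not_subdivision_adj_inr_inr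
  · rintro (b | f) hw (b' | f') hw' heq <;> simp_all

end Subdivision

section RatioBounds

variable {W : Type*} [DecidableEq W] {Γ : SimpleGraph W} [DecidableRel Γ.Adj]
  {S : Finset W} {u : W}

lemma card_filter_adj_erase_lt {v : W} (hu : u ∈ S) (hvu : Γ.Adj v u) :
    #((S.erase u).filter (Γ.Adj v)) < #(S.filter (Γ.Adj v)) := by
  rw [filter_erase]
  exact card_erase_lt_of_mem (mem_filter.2 ⟨hu, hvu⟩)

variable [Fintype W]

lemma mul_matchEvalOn_erase_lt {x c β : ℝ} (hu : u ∈ S) (hβ : 0 < β) (hcx : c < x)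
    (hdeg : (#(S.filter (Γ.Adj u)) : ℝ) ≤ (x - c) * β)
    (hnb : ∀ v ∈ S.filter (Γ.Adj u),
      β * matchEvalOn Γ ((S.erase u).erase v) x < matchEvalOn Γ (S.erase u) x)
    (hpos : 0 < matchEvalOn Γ (S.erase u) x) :
    c * matchEvalOn Γ (S.erase u) x < matchEvalOn Γ S x := by
  rw [matchEvalOn_eq hu]
  set N := S.filter (Γ.Adj u)
  suffices β * ∑ v ∈ N, matchEvalOn Γ ((S.erase u).erase v) x <
      (x - c) * β * matchEvalOn Γ (S.erase u) x by nlinarith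
  rcases N.eq_empty_or_nonempty with hN | hN
  · simp only [hN, sum_empty, mul_zero]
    have := sub_pos.2 hcx
    positivity
  calc β * ∑ v ∈ N, matchEvalOn Γ ((S.erase u).erase v) x
      < ∑ _v ∈ N, matchEvalOn Γ (S.erase u) x := by
        rw [mul_sum]; exact sum_lt_sum_of_nonempty hN hnb
    _ = #N * matchEvalOn Γ (S.erase u) x := by rw [sum_const, nsmul_eq_mul]
    _ ≤ (x - c) * β * matchEvalOn Γ (S.erase u) x := by gcongr

end RatioBounds

section SubdivisionBounds

variable [Fintype V] [DecidableEq V] {G : SimpleGraph V} [DecidableRel G.Adj]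

theorem subdivision_matchEvalOn_bounds (hΔ : 2 ≤ G.maxDegree) {x : ℝ}
    (hx : 1 + √((G.maxDegree : ℝ) - 1) ≤ x) (S : Finset (V ⊕ G.edgeSet)) :
    0 < matchEvalOn (subdivision G) S x ∧
    (∀ a : V, Sum.inl a ∈ S → #(S.filter ((subdivision G).Adj (Sum.inl a))) < G.maxDegree →
      matchEvalOn (subdivision G) (S.erase (Sum.inl a)) x < matchEvalOn (subdivision G) S x) ∧
    (∀ e : G.edgeSet, Sum.inr e ∈ S → #(S.filter ((subdivision G).Adj (Sum.inr e))) ≤ 1 →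
      √((G.maxDegree : ℝ) - 1) * matchEvalOn (subdivision G) (S.erase (Sum.inr e)) x <
        matchEvalOn (subdivision G) S x) := by
  set Δ := G.maxDegree
  set t := √((Δ : ℝ) - 1)
  have hΔ' : (2 : ℝ) ≤ Δ := by exact_mod_cast hΔ
  have ht2 : t ^ 2 = Δ - 1 := Real.sq_sqrt (by linarith)
  have ht1 : 1 ≤ t := Real.one_le_sqrt.2 (by linarith)
  have hdeg_inl : ∀ (T : Finset (V ⊕ G.edgeSet)) a,
      (#(T.filter ((subdivision G).Adj (Sum.inl a))) : ℝ) ≤ Δ := fun T a => by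
    exact_mod_cast (card_filter_subdivision_adj_inl_le T a).trans (G.degree_le_maxDegree a)
  have hdeg_inr : ∀ (T : Finset (V ⊕ G.edgeSet)) e,
      (#(T.filter ((subdivision G).Adj (Sum.inr e))) : ℝ) ≤ 2 := fun T e => by
    exact_mod_cast card_filter_subdivision_adj_inr_le T e
  induction S using Finset.strongInduction with | H S IH => ?_
  have hnb_inl : ∀ a, Sum.inl a ∈ S → ∀ v ∈ S.filter ((subdivision G).Adj (Sum.inl a)),
      t * matchEvalOn (subdivision G) ((S.erase (Sum.inl a)).erase v) x <
        matchEvalOn (subdivision G) (S.erase (Sum.inl a)) x := by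
    rintro a ha (b | e) hv <;> rw [mem_filter] at hv
    · exact absurd hv.2 not_subdivision_adj_inl_inl
    refine (IH _ (erase_ssubset ha)).2.2 e (mem_erase.2 ⟨by simp, hv.1⟩) ?_
    have := card_filter_adj_erase_lt ha (SimpleGraph.adj_symm _ hv.2)
    have := card_filter_subdivision_adj_inr_le S e
    omega
  have hnb_inr : ∀ e, Sum.inr e ∈ S → ∀ v ∈ S.filter ((subdivision G).Adj (Sum.inr e)),
      1 * matchEvalOn (subdivision G) ((S.erase (Sum.inr e)).erase v) x <
        matchEvalOn (subdivision G) (S.erase (Sum.inr e)) x := by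
    rintro e he (b | f) hv <;> rw [mem_filter] at hv
    · rw [one_mul]
      refine (IH _ (erase_ssubset he)).2.1 b (mem_erase.2 ⟨by simp, hv.1⟩) ?_
      have := card_filter_adj_erase_lt he (SimpleGraph.adj_symm _ hv.2)
      have := (card_filter_subdivision_adj_inl_le S b).trans (G.degree_le_maxDegree b)
      omega
    · exact absurd hv.2 not_subdivision_adj_inr_inr
  have hpos : ∀ w ∈ S, 0 < matchEvalOn (subdivision G) (S.erase w) x := fun w hw =>
    (IH _ (erase_ssubset hw)).1
  refine ⟨?_, fun a ha hdeg => ?_, fun e he hdeg => ?_⟩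
  · rcases S.eq_empty_or_nonempty with rfl | ⟨w, hw⟩
    · rw [matchEvalOn_empty]; exact one_pos
    rw [← zero_mul (matchEvalOn (subdivision G) (S.erase w) x)]
    rcases w with a | e
    · -- `Δ ≤ (1 + t) t` because `t² = Δ - 1` and `t ≥ 1`
      refine mul_matchEvalOn_erase_lt hw (by positivity) (by linarith) ?_ (hnb_inl a hw)
        (hpos _ hw)
      nlinarith [hdeg_inl S a]
    · exact mul_matchEvalOn_erase_lt hw one_pos (by linarith) (by linarith [hdeg_inr S e])
        (hnb_inr e hw) (hpos _ hw)
  · have hdeg' : (#(S.filter ((subdivision G).Adj (Sum.inl a))) : ℝ) + 1 ≤ Δ := by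
      exact_mod_cast Nat.succ_le_of_lt hdeg
    simpa using mul_matchEvalOn_erase_lt (c := 1) ha (by positivity) (by linarith)
      (by nlinarith) (hnb_inl a ha) (hpos _ ha)
  · have hdeg' : (#(S.filter ((subdivision G).Adj (Sum.inr e))) : ℝ) ≤ 1 := by
      exact_mod_cast hdeg
    exact mul_matchEvalOn_erase_lt he one_pos (by linarith) (by linarith) (hnb_inr e he)
      (hpos _ he)

end SubdivisionBounds

lemma eval_matchPoly [Fintype V] [DecidableEq V] (G : SimpleGraph V) [DecidableRel G.Adj]
    (x : ℝ) : (matchPoly G).eval x = matchEvalOn G univ x := by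
  have : matchingsOn G univ = matchings G := by ext M; simp [mem_matchingsOn]
  simp [matchPoly, matchEvalOn, this, Polynomial.eval_finsetSum]

/-- Beware `lroot p = sSup ∅ = 0` when `p` has no real root. -/
lemma lroot_lt_of_eval_pos {p : Polynomial ℝ} {t : ℝ} (ht : 0 < t)
    (h : ∀ y, t ≤ y → 0 < p.eval y) : lroot p < t := by
  have hp : p ≠ 0 := fun hp => by simpa [hp] using h t le_rfl
  rcases Set.eq_empty_or_nonempty {x : ℝ | p.IsRoot x} with hroots | hroots
  · rw [lroot, hroots, Real.sSup_empty]; exact ht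
  · have hmem : p.IsRoot (lroot p) := hroots.csSup_mem (Polynomial.finite_setOfPred_isRoot hp)
    by_contra! hle
    exact (h _ hle).ne' hmem

section Charpoly

variable [Fintype V] [DecidableEq V] {G : SimpleGraph V} [DecidableRel G.Adj]

open Equiv Function Polynomial

def IsEdgePerm (G : SimpleGraph V) (σ : Perm V) : Prop := ∀ i, σ i ≠ i → G.Adj i (σ i)

def permMatching (σ : Perm V) : Finset (Sym2 V) := σ.support.image fun i => s(i, σ i)

variable {σ : Perm V}

lemma mem_permMatching {e : Sym2 V} : e ∈ permMatching σ ↔ ∃ i, σ i ≠ i ∧ s(i, σ i) = e := by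
  simp [permMatching]

lemma covered_permMatching (hσ : Involutive σ) : covered (permMatching σ) = σ.support := by
  ext v
  simp only [mem_covered, mem_permMatching, Perm.mem_support]
  constructor
  · rintro ⟨_, ⟨i, hi, rfl⟩, hv⟩
    rcases Sym2.mem_iff.1 hv with rfl | rfl
    exacts [hi, fun h => hi (by rw [← h, hσ])]
  · exact fun hv => ⟨_, ⟨v, hv, rfl⟩, Sym2.mem_mk_left _ _⟩

lemma permMatching_mem_matchings (hG : IsEdgePerm G σ) (hσ : Involutive σ) :
    permMatching σ ∈ matchings G := by
  refine mem_matchings.2 ⟨fun e he => ?_, ?_⟩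
  · obtain ⟨i, hi, rfl⟩ := mem_permMatching.1 he
    exact G.mem_edgeFinset.2 (hG i hi)
  · intro e he f hf hef w hwe hwf
    obtain ⟨i, -, rfl⟩ := mem_permMatching.1 he
    obtain ⟨j, -, rfl⟩ := mem_permMatching.1 hf
    apply hef
    rcases Sym2.mem_iff.1 hwe with rfl | rfl <;> rcases Sym2.mem_iff.1 hwf with h | h
    · rw [h]
    · rw [h, hσ, Sym2.eq_swap]
    · rw [← h, hσ, Sym2.eq_swap]
    · rw [σ.injective h]

lemma eq_of_permMatching_eq {τ : Perm V} (hσ : Involutive σ) (hτ : Involutive τ)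
    (h : permMatching σ = permMatching τ) : σ = τ := by
  suffices key : ∀ {σ τ : Perm V}, Involutive σ → Involutive τ →
      permMatching σ = permMatching τ → ∀ v, σ v ≠ v → σ v = τ v by
    ext v
    by_cases hv : σ v = v
    · by_cases hv' : τ v = v
      · rw [hv, hv']
      · exact (key hτ hσ h.symm v hv').symm
    · exact key hσ hτ h v hv
  intro σ τ hσ hτ h v hv
  obtain ⟨j, -, hj⟩ := mem_permMatching.1 (h ▸ mem_permMatching.2 ⟨v, hv, rfl⟩)
  rcases Sym2.eq_iff.1 hj with ⟨rfl, h'⟩ | ⟨rfl, h'⟩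
  · exact h'.symm
  · exact (hτ (σ v)).symm.trans (congrArg τ h')

noncomputable def partner (M : Finset (Sym2 V)) (v : V) : V :=
  if h : ∃ e ∈ M, v ∈ e then Sym2.Mem.other h.choose_spec.2 else v

variable {M : Finset (Sym2 V)}

lemma partner_of_notMem_covered {v : V} (h : v ∉ covered M) : partner M v = v :=
  dif_neg (mem_covered.not.1 h)

lemma mk_partner (hM : M ∈ matchings G) {v : V} {e : Sym2 V} (he : e ∈ M) (hv : v ∈ e) :
    s(v, partner M v) = e := by
  have h : ∃ e ∈ M, v ∈ e := ⟨e, he, hv⟩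
  rw [partner, dif_pos h, Sym2.other_spec]
  exact eq_of_mem_matchings hM h.choose_spec.1 h.choose_spec.2 he hv

lemma partner_involutive (hM : M ∈ matchings G) : Involutive (partner M) := by
  intro v
  by_cases hv : v ∈ covered M
  · obtain ⟨e, he, hve⟩ := mem_covered.1 hv
    have h₁ := mk_partner hM he hve
    have h₂ := mk_partner hM he (h₁ ▸ Sym2.mem_mk_right _ _ : partner M v ∈ e)
    rw [← h₁, Sym2.eq_iff] at h₂
    rcases h₂ with ⟨h, h'⟩ | ⟨-, h'⟩
    · rw [h', h]
    · exact h'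
  · rw [partner_of_notMem_covered hv, partner_of_notMem_covered hv]

lemma exists_isEdgePerm_permMatching_eq (hM : M ∈ matchings G) :
    ∃ σ : Perm V, IsEdgePerm G σ ∧ permMatching σ = M := by
  refine ⟨(partner_involutive hM).toPerm, fun i hi => ?_, ?_⟩
  · obtain ⟨e, he, hie⟩ := mem_covered.1 (not_imp_comm.1 partner_of_notMem_covered hi)
    rw [← G.mem_edgeSet, Involutive.coe_toPerm, mk_partner hM he hie]
    exact mem_edgeSet_of_mem_matchings hM he
  · ext e
    simp only [mem_permMatching, Involutive.coe_toPerm]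
    constructor
    · rintro ⟨i, hi, rfl⟩
      obtain ⟨f, hf, hif⟩ := mem_covered.1 (not_imp_comm.1 partner_of_notMem_covered hi)
      rwa [mk_partner hM hf hif]
    · intro he
      induction e with
      | h a b =>
        refine ⟨a, fun h => ?_, mk_partner hM he (Sym2.mem_mk_left a b)⟩
        have := mk_partner hM he (Sym2.mem_mk_left a b)
        rw [h] at this
        exact G.not_isDiag_of_mem_edgeSet (mem_edgeSet_of_mem_matchings hM he)
          (this ▸ Sym2.mk_isDiag_iff.2 rfl)

lemma sign_of_involutive (hσ : Involutive σ) : Perm.sign σ = (-1) ^ (#σ.support / 2) := by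
  rw [Perm.sign_of_pow_two_eq_one (Perm.ext fun v => by simp [sq, hσ v]),
    Perm.card_fixedPoints, Perm.sum_cycleType, Nat.sub_sub_self (card_le_univ _)]

lemma prod_charmatrix_adjMatrix (hG : IsEdgePerm G σ) :
    ∏ i, (G.adjMatrix ℝ).charmatrix (σ i) i =
      (-1) ^ #σ.support * X ^ (Fintype.card V - #σ.support) := by
  have hentry : ∀ i, (G.adjMatrix ℝ).charmatrix (σ i) i = if σ i ≠ i then -1 else X := by
    intro i
    split_ifs with hi
    · rw [Matrix.charmatrix_apply_ne _ _ _ hi, SimpleGraph.adjMatrix_apply,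
        if_pos (hG i hi).symm, map_one]
    · rw [not_not.1 hi, Matrix.charmatrix_apply_eq, SimpleGraph.adjMatrix_apply,
        if_neg (G.irrefl), map_zero, sub_zero]
  rw [prod_congr rfl fun i _ => hentry i, prod_ite, prod_const, prod_const,
    ← card_compl, Perm.support, compl_filter]

lemma prod_charmatrix_adjMatrix_eq_zero (hG : ¬ IsEdgePerm G σ) :
    ∏ i, (G.adjMatrix ℝ).charmatrix (σ i) i = 0 := by
  obtain ⟨i, hi, hadj⟩ : ∃ i, σ i ≠ i ∧ ¬ G.Adj i (σ i) := by simpa [IsEdgePerm] using hG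
  refine prod_eq_zero (mem_univ i) ?_
  rw [Matrix.charmatrix_apply_ne _ _ _ hi, SimpleGraph.adjMatrix_apply,
    if_neg (fun h => hadj h.symm), map_zero, neg_zero]

theorem charpoly_adjMatrix_eq_matchPoly (h : ∀ σ : Perm V, IsEdgePerm G σ → Involutive σ) :
    (G.adjMatrix ℝ).charpoly = matchPoly G := by
  classical
  rw [Matrix.charpoly, Matrix.det_apply, matchPoly,
    ← sum_subset (subset_univ (univ.filter (IsEdgePerm G))) fun σ _ hσ => by
      rw [prod_charmatrix_adjMatrix_eq_zero (by simpa using hσ), smul_zero]]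
  refine sum_nbij permMatching (fun σ hσ => ?_) (fun σ hσ τ hτ => ?_) (fun M hM => ?_)
    (fun σ hσ => ?_)
  · simp only [mem_filter, mem_univ, true_and] at hσ
    exact permMatching_mem_matchings hσ (h σ hσ)
  · simp only [coe_filter, mem_univ, true_and, Set.mem_ofPred_eq] at hσ hτ
    exact eq_of_permMatching_eq (h σ hσ) (h τ hτ)
  · obtain ⟨σ, hσ, rfl⟩ := exists_isEdgePerm_permMatching_eq hM
    exact ⟨σ, by simpa using hσ, rfl⟩
  · simp only [mem_filter, mem_univ, true_and] at hσ
    have hcard := card_covered (permMatching_mem_matchings hσ (h σ hσ))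
    rw [covered_permMatching (h σ hσ)] at hcard
    rw [prod_charmatrix_adjMatrix hσ, sign_of_involutive (h σ hσ), hcard, pow_mul,
      Nat.mul_div_cancel_left _ two_pos]
    simp [Units.smul_def, zsmul_eq_mul]

end Charpoly

section Forest

open Equiv Function SimpleGraph

lemma reachable_of_iterate {α β : Type*} {Γ : SimpleGraph β} (p : α → β) (f : α → α)
    {j x : α} (hstep : ∀ y, y ≠ j → f y ≠ j → Γ.Reachable (p y) (p (f y))) :
    ∀ n, (∀ k ≤ n, f^[k] x ≠ j) → Γ.Reachable (p x) (p (f^[n] x))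
  | 0, _ => Reachable.refl _
  | n + 1, h => by
    refine (reachable_of_iterate p f hstep n fun k hk => h k (by omega)).trans ?_
    rw [iterate_succ_apply']
    exact hstep _ (h n (by omega)) (iterate_succ_apply' f n x ▸ h (n + 1) le_rfl)

lemma reachable_deleteEdges_of_mem {G : SimpleGraph V} {e f : Sym2 V} (hf : f ∈ G.edgeSet)
    (hfe : f ≠ e) {a b : V} (ha : a ∈ f) (hb : b ∈ f) : (G.deleteEdges {e}).Reachable a b := by
  by_cases hab : a = b
  · exact hab ▸ Reachable.refl a
  obtain rfl := (Sym2.mem_and_mem_iff hab).1 ⟨ha, hb⟩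
  exact Adj.reachable (deleteEdges_adj.2 ⟨hf, hfe⟩)

variable {G : SimpleGraph V}

lemma subdivision_adj_inr_iff {e : G.edgeSet} {z : V ⊕ G.edgeSet} :
    (subdivision G).Adj (Sum.inr e) z ↔ ∃ b ∈ (e : Sym2 V), z = Sum.inl b := by
  rcases z with b | f <;> simp

noncomputable def subdivisionRetract : V ⊕ G.edgeSet → V :=
  Sum.elim id fun f => (f : Sym2 V).out.1

lemma reachable_subdivisionRetract_of_adj {e : G.edgeSet} {x y : V ⊕ G.edgeSet}
    (hxy : (subdivision G).Adj x y) (hx : x ≠ Sum.inr e) (hy : y ≠ Sum.inr e) :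
    (G.deleteEdges {(e : Sym2 V)}).Reachable (subdivisionRetract x) (subdivisionRetract y) := by
  have key : ∀ (a : V) (f : G.edgeSet), a ∈ (f : Sym2 V) → f ≠ e →
      (G.deleteEdges {(e : Sym2 V)}).Reachable a (f : Sym2 V).out.1 := fun a f ha hfe =>
    reachable_deleteEdges_of_mem f.2 (Subtype.coe_injective.ne hfe) ha (Sym2.out_fst_mem _)
  rcases x with a | f <;> rcases y with b | f'
  · exact absurd hxy not_subdivision_adj_inl_inl
  · exact key a f' (subdivision_adj_inl_inr.1 hxy) (fun h => hy (h ▸ rfl))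
  · exact (key b f (subdivision_adj_inr_inl.1 hxy) (fun h => hx (h ▸ rfl))).symm
  · exact absurd hxy not_subdivision_adj_inr_inr

variable [Finite V]

/-- An orbit of length at least three passes through a subdivision vertex `v_e` and, collapsed
onto `G`, joins the two ends of `e` without using `e`, so `e` would not be a bridge. -/
theorem involutive_of_isEdgePerm_subdivision (hG : G.IsAcyclic)
    {σ : Perm (V ⊕ G.edgeSet)} (hσ : IsEdgePerm (subdivision G) σ) : Involutive σ := by
  classical
  intro i
  by_contra h2
  have hi : σ i ≠ i := fun h => h2 (by rw [h, h])
  obtain ⟨e, hj, hj2⟩ : ∃ e : G.edgeSet,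
      σ (Sum.inr e) ≠ Sum.inr e ∧ σ (σ (Sum.inr e)) ≠ Sum.inr e := by
    rcases i with a | e
    · rcases hσa : σ (Sum.inl a) with b | e
      · exact absurd (hσ _ hi) (by rw [hσa]; exact not_subdivision_adj_inl_inl)
      · refine ⟨e, ?_, ?_⟩ <;> rw [← hσa]
        exacts [fun h => hi (σ.injective h), fun h => h2 (σ.injective h)]
    · exact ⟨e, hi, h2⟩
  set j : V ⊕ G.edgeSet := Sum.inr e
  have hex : ∃ n, σ^[n] (σ j) = j := ⟨orderOf σ - 1, by
    rw [← iterate_succ_apply, Nat.succ_eq_add_one, Nat.sub_add_cancel (orderOf_pos σ),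
      Perm.iterate_eq_pow, pow_orderOf_eq_one, Perm.one_apply]⟩
  have hn0 : Nat.find hex ≠ 0 := fun h => hj (by simpa [h] using Nat.find_spec hex)
  set y := σ^[Nat.find hex - 1] (σ j)
  have hσy : σ y = j := by
    rw [← iterate_succ_apply' σ, Nat.succ_eq_add_one, Nat.sub_add_cancel (by omega)]
    exact Nat.find_spec hex
  have hyj : y ≠ j := Nat.find_min hex (by omega)
  have hreach : (G.deleteEdges {(e : Sym2 V)}).Reachable (subdivisionRetract (σ j))
      (subdivisionRetract y) := reachable_of_iterate subdivisionRetract σ (fun z hz hσz => by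
      by_cases hfix : σ z = z
      · rw [hfix]
      · exact reachable_subdivisionRetract_of_adj (hσ z hfix) hz hσz)
    (Nat.find hex - 1) fun k hk => Nat.find_min hex (by omega)
  obtain ⟨b, hb, hσj⟩ := subdivision_adj_inr_iff.1 (hσ j hj)
  obtain ⟨c, hc, hyc⟩ := subdivision_adj_inr_iff.1 (hσy ▸ (hσ y (hσy ▸ hyj.symm)).symm)
  have hbc : b ≠ c := by
    rintro rfl
    exact hj2 (by rw [hσj, ← hyc, hσy])
  obtain he := (Sym2.mem_and_mem_iff hbc).1 ⟨hb, hc⟩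
  have hadj : G.Adj b c := by rw [← mem_edgeSet, ← he]; exact e.2
  refine isBridge_iff.1 (isAcyclic_iff_forall_adj_isBridge.1 hG hadj) ?_
  rw [hσj, hyc] at hreach
  simpa [← he, subdivisionRetract] using hreach

end Forest

/-- For a finite graph `G` with `Δ(G) ≥ 2`, the largest root of the
matching polynomial of the subdivision `S(G)` satisfies
`λ(𝓜(S(G), x)) < 1 + √(Δ(G) − 1)`; in particular, if `G` is a forest, then the largest
eigenvalue (largest root of the characteristic polynomial) of the adjacency matrix of
`S(G)` satisfies the same strict inequality. -/
theorem lroot_matchPoly_subdivision_lt [Fintype V] [DecidableEq V] (G : SimpleGraph V)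
    [DecidableRel G.Adj] (hΔ : 2 ≤ G.maxDegree) :
    lroot (matchPoly (subdivision G)) < 1 + Real.sqrt ((G.maxDegree : ℝ) - 1)
    ∧ (G.IsAcyclic →
        lroot (((subdivision G).adjMatrix ℝ).charpoly) <
          1 + Real.sqrt ((G.maxDegree : ℝ) - 1)) := by
  have hpos : ∀ y, 1 + √((G.maxDegree : ℝ) - 1) ≤ y →
      0 < (matchPoly (subdivision G)).eval y := fun y hy => by
    rw [eval_matchPoly]
    exact (subdivision_matchEvalOn_bounds hΔ hy univ).1
  refine ⟨lroot_lt_of_eval_pos (by positivity) hpos, fun hG => ?_⟩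
  rw [charpoly_adjMatrix_eq_matchPoly fun _ => involutive_of_isEdgePerm_subdivision hG]
  exact lroot_lt_of_eval_pos (by positivity) hpos

end LM
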